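/- Let A be a unital Banach algebra, τ : A → ℂ a continuous trace, and a ∈ A with ‖a - 1‖ < 1 so that log a = Σ_{n≥1} (-1)^{n-1}(a-1)^n/n converges. Then for the straight-line path γ(t) = 1 + t(a-1), one has τ(log a) = ∫₀¹ τ(γ(t)⁻¹ γ'(t)) dt. -/

import Mathlib

open intervalIntegral

/-- Let `A` be a unital Banach algebra, `τ : A → ℂ` a continuous trace, and `a ∈ A` with
`‖a - 1‖ < 1`, so that `log a = ∑_{n≥1} (-1)^{n-1}(a-1)^n/n` converges. Then for the
straight-line path `γ(t) = 1 + t(a-1)`, one has `τ(log a) = ∫₀¹ τ(γ(t)⁻¹ γ'(t)) dt`. -/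
theorem trace_log_eq_integral
    (A : Type*) [NormedRing A] [NormedAlgebra ℂ A] [CompleteSpace A]
    (τ : A →L[ℂ] ℂ) (hτ : ∀ x y : A, τ (x * y) = τ (y * x))
    (a : A) (ha : ‖a - 1‖ < 1) :
    τ (∑' n : ℕ, ((-1 : ℂ) ^ n / (n + 1)) • (a - 1) ^ (n + 1))
      = ∫ t in (0:ℝ)..1, τ (Ring.inverse (1 + (t : ℂ) • (a - 1)) * (a - 1)) := by
  set b := a - 1 with hb
  -- geometric summability
  have hsum_pow : Summable fun n : ℕ => ‖b‖ ^ (n + 1) :=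
    ((summable_geometric_of_lt_one (norm_nonneg b) ha).mul_left ‖b‖).congr
      (fun n => by ring)
  -- LHS
  have hsumL : Summable fun n : ℕ => ((-1 : ℂ) ^ n / (n + 1)) • b ^ (n + 1) := by
    refine Summable.of_norm_bounded hsum_pow fun n => ?_
    rw [norm_smul]
    have h1 : ‖(-1 : ℂ) ^ n / (n + 1)‖ ≤ 1 := by
      have hc : ((n:ℂ)+1) = ((n+1:ℕ):ℂ) := by push_cast; ring
      rw [norm_div, norm_pow, norm_neg, norm_one, one_pow, hc, Complex.norm_natCast]
      rw [div_le_one (by exact_mod_cast Nat.succ_pos n)]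
      exact_mod_cast Nat.one_le_iff_ne_zero.mpr (Nat.succ_ne_zero n)
    calc ‖(-1 : ℂ) ^ n / (n + 1)‖ * ‖b ^ (n + 1)‖
        ≤ 1 * ‖b‖ ^ (n + 1) :=
          mul_le_mul h1 (norm_pow_le' _ (Nat.succ_pos n)) (norm_nonneg _) one_pos.le
      _ = ‖b‖ ^ (n + 1) := one_mul _
  -- constants
  set c : ℕ → ℂ := fun n => τ (b ^ (n + 1)) with hc
  have hcbound : ∀ n, ‖c n‖ ≤ ‖τ‖ * ‖b‖ ^ (n + 1) := fun n =>
    (τ.le_opNorm _).trans (by gcongr; exact norm_pow_le' _ (Nat.succ_pos n))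
  have hsumc : Summable fun n => ‖c n‖ :=
    Summable.of_nonneg_of_le (fun n => norm_nonneg _) hcbound (hsum_pow.mul_left ‖τ‖)
  -- pointwise identity on [0,1]
  have hpt : ∀ t : ℝ, t ∈ Set.Ioc (0:ℝ) 1 →
      τ (Ring.inverse (1 + (t : ℂ) • b) * b) = ∑' n : ℕ, (-(t:ℂ)) ^ n * c n := by
    intro t ht
    have hnorm : ‖-((t:ℂ) • b)‖ < 1 := by
      rw [norm_neg, norm_smul, Complex.norm_real, Real.norm_eq_abs,
        abs_of_nonneg ht.1.le]
      calc t * ‖b‖ ≤ 1 * ‖b‖ := by gcongr; exact ht.2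
        _ < 1 := by rwa [one_mul]
    have hinv : Ring.inverse (1 + (t : ℂ) • b) = ∑' n : ℕ, (-((t:ℂ) • b)) ^ n := by
      rw [(sub_neg_eq_add 1 ((t:ℂ) • b)).symm,
        ← geom_series_eq_inverse _ hnorm]
    have hpow : ∀ n : ℕ, (-((t:ℂ) • b)) ^ n * b = ((-(t:ℂ)) ^ n) • b ^ (n + 1) := by
      intro n
      rw [show -((t:ℂ) • b) = (-(t:ℂ)) • b by rw [neg_smul], smul_pow, smul_mul_assoc,
        pow_succ]
    have hs : Summable fun n : ℕ => (-((t:ℂ) • b)) ^ n :=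
      summable_geometric_of_norm_lt_one hnorm
    rw [hinv, (hs.hasSum.mul_right b).tsum_eq.symm]
    rw [τ.map_tsum (hs.mul_right b)]
    congr 1
    funext n
    rw [hpow, map_smul, smul_eq_mul]
  -- rewrite LHS
  rw [τ.map_tsum hsumL]
  simp_rw [map_smul, smul_eq_mul]
  -- rewrite RHS integral
  rw [intervalIntegral.integral_of_le zero_le_one,
    MeasureTheory.setIntegral_congr_fun measurableSet_Ioc hpt]
  -- swap sum and integral
  have hFint : ∀ n : ℕ, MeasureTheory.IntegrableOn
      (fun t : ℝ => (-(t:ℝ):ℂ) ^ n * c n) (Set.Ioc 0 1) := by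
    intro n
    apply Continuous.integrableOn_Ioc
    exact (Continuous.pow (by continuity) n).mul continuous_const
  have hswap := MeasureTheory.integral_tsum_of_summable_integral_norm (μ := MeasureTheory.volume.restrict (Set.Ioc (0:ℝ) 1)) hFint ?_
  · rw [← hswap]
    congr 1
    funext n
    have : (∫ t in Set.Ioc (0:ℝ) 1, (-(t:ℝ):ℂ) ^ n) = (-1:ℂ)^n / (n+1) := by
      rw [← intervalIntegral.integral_of_le zero_le_one]
      have : ∀ t : ℝ, (-(t:ℝ):ℂ) ^ n = (-1:ℂ)^n * (((t^n : ℝ)):ℂ) := by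
        intro t; push_cast; ring
      simp_rw [this]
      rw [intervalIntegral.integral_const_mul, intervalIntegral.integral_ofReal,
        integral_pow]
      push_cast
      ring
    rw [MeasureTheory.integral_mul_const, this]
  · refine Summable.of_nonneg_of_le (fun n => MeasureTheory.integral_nonneg fun t => norm_nonneg _) (fun n => ?_) hsumc
    calc (∫ t in Set.Ioc (0:ℝ) 1, ‖(-(t:ℝ):ℂ) ^ n * c n‖)
        ≤ ∫ _t in Set.Ioc (0:ℝ) 1, ‖c n‖ := by
          refine MeasureTheory.integral_mono_of_nonneg (Filter.Eventually.of_forall fun t => norm_nonneg _) (MeasureTheory.integrable_const _) ?_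
          refine (MeasureTheory.ae_restrict_iff' measurableSet_Ioc).mpr ?_
          refine Filter.Eventually.of_forall fun t ht => ?_
          show ‖(-(t:ℝ):ℂ) ^ n * c n‖ ≤ ‖c n‖
          rw [norm_mul, norm_pow]
          calc ‖(-(t:ℝ):ℂ)‖ ^ n * ‖c n‖ ≤ 1 ^ n * ‖c n‖ := by
                gcongr
                rw [norm_neg, Complex.norm_real, Real.norm_eq_abs,
                  abs_of_nonneg ht.1.le]
                exact ht.2
            _ = ‖c n‖ := by rw [one_pow, one_mul]
      _ ≤ ‖c n‖ := by
          rw [MeasureTheory.setIntegral_const, MeasureTheory.measureReal_def, Real.volume_Ioc]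
          simp
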